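/- On an odd Poisson supermanifold (or algebraically: for an odd Poisson algebra A with a 'divergence'-type odd second-order operator Δ_ρ satisfying Δ_ρ(fg) = (Δ_ρ f)g + (−1)^{f̃} f(Δ_ρ g) + (−1)^{f̃+1}{f,g}), the operator Δ_ρ is a derivation of the odd bracket: Δ_ρ{f,g} = {Δ_ρ f, g} + (−1)^{f̃+1}{f, Δ_ρ g}, provided the square Δ_ρ² is a derivation of the product. -/
import Mathlib


/-- The Koszul sign `(-1)^{pq}` for parities `p q : ZMod 2`. -/
def ksign (p q : ZMod 2) : ℤ := if p = 1 ∧ q = 1 then -1 else 1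

variable (k : Type) [Field k] (A : Type) [Ring A] [Algebra k A]

/-- The operator of (left) multiplication by `a`. -/
def lmul (a : A) : Module.End k A := LinearMap.mulLeft k a

/-- The supercommutator `[X,Y] = XY - (-1)^{pq} YX` of operators of parities `p`, `q`. -/
def sbr (p q : ZMod 2) (X Y : Module.End k A) : Module.End k A :=
  X * Y - ksign p q • (Y * X)

/-- Iterated supercommutators with multiplication operators:
starting from an operator (with its parity), successively take the supercommutator
with `lmul a` for each tagged element `(p, a)` in the list. -/
def opFold (X : ZMod 2 × Module.End k A) (l : List (ZMod 2 × A)) :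
    ZMod 2 × Module.End k A :=
  l.foldl (fun X pa => (X.1 + pa.1, sbr k A X.1 pa.1 X.2 (lmul k A pa.2))) X

/-- The `n`-ary Koszul bracket `{a₁,…,aₙ} = [⋯[[Δ,L_{a₁}],L_{a₂}]⋯,L_{aₙ}](1)`. -/
def kbr (e : ZMod 2) (Δ : Module.End k A) (l : List (ZMod 2 × A)) : A :=
  (opFold k A (e, Δ) l).2 1

variable (𝒜 : ZMod 2 → Submodule k A)

/-- Supercommutativity of the product w.r.t. a `ZMod 2`-grading `𝒜`. -/
def IsSuperComm : Prop :=
  ∀ (i j : ZMod 2) (a b : A), a ∈ 𝒜 i → b ∈ 𝒜 j → a * b = ksign i j • (b * a)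

/-- The operator `Δ` is homogeneous of parity `e` w.r.t. the grading `𝒜`. -/
def HasParity (e : ZMod 2) (Δ : Module.End k A) : Prop :=
  ∀ (i : ZMod 2) (a : A), a ∈ 𝒜 i → Δ a ∈ 𝒜 (i + e)

/-- All entries of a parity-tagged list are homogeneous of the indicated parity. -/
def Homog (l : List (ZMod 2 × A)) : Prop := ∀ pa ∈ l, pa.2 ∈ 𝒜 pa.1

/-- `Δ` (of parity `e`) is a differential operator of order `≤ n` in the Grothendieck
sense: all `n+1`-fold iterated supercommutators with multiplication operators vanish. -/
def OrdLE (e : ZMod 2) (Δ : Module.End k A) (n : ℕ) : Prop :=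
  ∀ l : List (ZMod 2 × A), Homog k A 𝒜 l → l.length = n + 1 →
    (opFold k A (e, Δ) l).2 = 0

/-- The bracket generated by an operator `Δ` of parity `e`, on an argument of parity `p`:
`{a,b} = Δ(ab) - (Δa)b - (-1)^{e p} a (Δb) + (Δ1) ab`. -/
def genBr (e p : ZMod 2) (Δ : Module.End k A) (a b : A) : A :=
  Δ (a * b) - Δ a * b - ksign e p • (a * Δ b) + Δ 1 * (a * b)

/-- For an odd Poisson algebra `(A, b)` with an odd second-order operator
`Δρ` generating the bracket via the deviation of the Leibniz rule
`Δρ(fg) = (Δρ f)g + (−1)^{f̃} f(Δρ g) + (−1)^{f̃+1} b(f,g)`: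
if the Jacobi identity holds and `Δρ²` is a derivation of the product, then `Δρ` is a
derivation of the odd bracket: `Δρ b(f,g) = b(Δρ f, g) + (−1)^{f̃+1} b(f, Δρ g)`. -/
theorem stmt15 (hsc : IsSuperComm k A 𝒜) (b : A →ₗ[k] A →ₗ[k] A)
    (hbgr : ∀ (i j : ZMod 2) (x y : A), x ∈ 𝒜 i → y ∈ 𝒜 j → b x y ∈ 𝒜 (i + j + 1))
    (hLeib : ∀ (i j m : ZMod 2) (f x y : A), f ∈ 𝒜 i → x ∈ 𝒜 j → y ∈ 𝒜 m →
      b f (x * y) = b f x * y + ksign (i + 1) j • (x * b f y))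
    (hJac : ∀ (i j : ZMod 2) (f x y : A), f ∈ 𝒜 i → x ∈ 𝒜 j →
      b f (b x y) = b (b f x) y + ksign (i + 1) (j + 1) • b x (b f y))
    (Δ : Module.End k A) (hpar : HasParity k A 𝒜 1 Δ) (hord : OrdLE k A 𝒜 1 Δ 2)
    (h1 : Δ 1 = 0)
    (hgen : ∀ (i j : ZMod 2) (f g : A), f ∈ 𝒜 i → g ∈ 𝒜 j →
      Δ (f * g) = Δ f * g + ksign i 1 • (f * Δ g) + ksign (i + 1) 1 • b f g)
    (hsq : ∀ (i j : ZMod 2) (f g : A), f ∈ 𝒜 i → g ∈ 𝒜 j →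
      Δ (Δ (f * g)) = Δ (Δ f) * g + f * Δ (Δ g)) :
    ∀ (i j : ZMod 2) (f g : A), f ∈ 𝒜 i → g ∈ 𝒜 j →
      Δ (b f g) = b (Δ f) g + ksign (i + 1) 1 • b f (Δ g) := by
  intro i j f g hf hg
  have hf' : Δ f ∈ 𝒜 (i + 1) := hpar i f hf
  have hg' : Δ g ∈ 𝒜 (j + 1) := hpar j g hg
  have e1 : Δ (Δ (f * g)) = Δ (Δ f * g) + ksign i 1 • Δ (f * Δ g)
      + ksign (i + 1) 1 • Δ (b f g) := by
    rw [hgen i j f g hf hg, map_add, map_add, map_zsmul, map_zsmul]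
  rw [hgen (i + 1) j (Δ f) g hf' hg, hgen i (j + 1) f (Δ g) hf hg',
    hsq i j f g hf hg] at e1
  have hi : ∀ x : ZMod 2, x = 0 ∨ x = 1 := by decide
  rcases hi i with rfl | rfl <;>
    simp only [ksign, show ((0:ZMod 2)+1) = 1 from rfl, show ((1:ZMod 2)+1) = 0 from rfl,
      show ((0:ZMod 2)+1+1) = 0 from rfl, show ((1:ZMod 2)+1+1) = 1 from rfl,
      show ((0:ZMod 2) = 1) = False by simp, eq_self_iff_true, true_and, and_true,
      false_and, if_true, if_false, one_smul, neg_smul, ite_true, ite_false] at e1 ⊢ <;>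
    [linear_combination (norm := abel) e1;
     linear_combination (norm := abel) e1.symm]
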